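/- For real x, y > 0 and λ, μ > 0 with λμ = xy, R_D(λ, x+λ, y+λ) + R_D(μ, x+μ, y+μ) = R_D(0, x, y) − 3/(y √(x + y + λ + μ)). -/

import Mathlib

/-!
Write `g = rdIntegrand x y`, `g(t) = (t (t + x))^(-1/2) (t + y)^(-3/2)`. The shift `t ↦ t + c`
gives `R_D(c, x + c, y + c) = (3/2) ∫_c^∞ g`. The inversion `t ↦ xy/t` maps `(0, λ)` onto
`(μ, ∞)` and turns `∫_μ^∞ g` into `∫_0^λ g̃` (`g̃ = rdDual x y`), and `g̃ - g` is the derivative of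
`h(t) = -(2/y) √t / √((t + x)(t + y))` (`h = rdCorrection x y`), which vanishes at `0`. Hence the
left side is `(3/2) (∫_0^∞ g + h(λ))`, and `(λ + x)(λ + y) = λ (x + y + λ + μ)` turns `(3/2) h(λ)`
into `-3 / (y √(x + y + λ + μ))`.
-/

open MeasureTheory Real

noncomputable def RC (x y : ℝ) : ℝ :=
  (1/2) * ∫ t in Set.Ioi (0:ℝ), (Real.sqrt (t + x))⁻¹ * (t + y)⁻¹

noncomputable def RF (x y z : ℝ) : ℝ :=
  (1/2) * ∫ t in Set.Ioi (0:ℝ), (Real.sqrt ((t + x) * (t + y) * (t + z)))⁻¹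

noncomputable def RD (x y z : ℝ) : ℝ :=
  (3/2) * ∫ t in Set.Ioi (0:ℝ),
    (Real.sqrt ((t + x) * (t + y)))⁻¹ * ((t + z) * Real.sqrt (t + z))⁻¹

noncomputable def RJ (x y z p : ℝ) : ℝ :=
  (3/2) * ∫ t in Set.Ioi (0:ℝ),
    (Real.sqrt ((t + x) * (t + y) * (t + z)))⁻¹ * (t + p)⁻¹

noncomputable def RG (x y z : ℝ) : ℝ :=
  (1/4) * ∫ t in Set.Ioi (0:ℝ),
    (Real.sqrt ((t + x) * (t + y) * (t + z)))⁻¹ *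
      (x / (t + x) + y / (t + y) + z / (t + z)) * t

open Set

noncomputable def rdIntegrand (x y t : ℝ) : ℝ :=
  (√(t * (t + x)))⁻¹ * ((t + y) * √(t + y))⁻¹

noncomputable def rdDual (x y t : ℝ) : ℝ :=
  y⁻¹ * (√t * ((t + x) * √(t + x))⁻¹ * (√(t + y))⁻¹)

noncomputable def rdCorrection (x y t : ℝ) : ℝ :=
  -(2 / y) * (√t * (√(t + x))⁻¹ * (√(t + y))⁻¹)

theorem RD_add_add_eq_integral (x y c : ℝ) :
    RD c (x + c) (y + c) = 3 / 2 * ∫ t in Ioi c, rdIntegrand x y t := by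
  have hshift (t : ℝ) : (√((t + c) * (t + (x + c))))⁻¹ * ((t + (y + c)) * √(t + (y + c)))⁻¹ =
      rdIntegrand x y (t + c) := by
    simp only [rdIntegrand]; ring_nf
  have hpre : (· + c) ⁻¹' Ioi c = Ioi (0 : ℝ) := by ext t; simp
  simp_rw [RD, hshift, ← hpre]
  rw [(measurePreserving_add_right volume c).setIntegral_preimage_emb
    (MeasurableEquiv.addRight c).measurableEmbedding]

theorem RD_zero_eq_integral (x y : ℝ) : RD 0 x y = 3 / 2 * ∫ t in Ioi 0, rdIntegrand x y t := by
  simpa using RD_add_add_eq_integral x y 0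

theorem image_const_div_Ioo_zero {c a : ℝ} (hc : 0 < c) (ha : 0 < a) :
    (fun t => c / t) '' Ioo 0 a = Ioi (c / a) := by
  simp only [div_eq_mul_inv]
  rw [show (fun t : ℝ => c * t⁻¹) = (c * ·) ∘ (·⁻¹) from rfl, image_comp, image_inv_eq_inv,
    inv_Ioo_0_left ha, image_mul_left_Ioi hc]

theorem strictAntiOn_const_div {c : ℝ} (hc : 0 < c) : StrictAntiOn (fun t => c / t) (Ioi 0) :=
  fun _ hs _ _ hst => div_lt_div_of_pos_left hc hs hst

theorem hasDerivAt_const_div (c : ℝ) {t : ℝ} (ht : t ≠ 0) :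
    HasDerivAt (fun t => c / t) (-c / t ^ 2) t := by
  simpa [div_eq_mul_inv, neg_div] using (hasDerivAt_inv ht).const_mul c

section
variable {x y : ℝ}

theorem continuousOn_rdDual (hx : 0 < x) (hy : 0 < y) : ContinuousOn (rdDual x y) (Ici 0) := by
  unfold rdDual
  fun_prop (disch := rintro t (ht : 0 ≤ t); positivity)

theorem continuousOn_rdCorrection (hx : 0 < x) (hy : 0 < y) :
    ContinuousOn (rdCorrection x y) (Ici 0) := by
  unfold rdCorrection
  fun_prop (disch := rintro t (ht : 0 ≤ t); positivity)

theorem integrableOn_Ioc_rdIntegrand (hx : 0 < x) (hy : 0 < y) (a : ℝ) :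
    IntegrableOn (rdIntegrand x y) (Ioc 0 a) := by
  have hsing : IntegrableOn (fun t : ℝ => t ^ (-1 / 2 : ℝ)) (Ioc 0 a) :=
    (intervalIntegral.intervalIntegrable_rpow' (by norm_num)).1
  have hreg : ContinuousOn (fun t => (√(t + x))⁻¹ * ((t + y) * √(t + y))⁻¹) (Icc 0 a) := by
    fun_prop (disch := rintro t ⟨ht, -⟩; positivity)
  refine (hsing.mul_continuousOn_of_subset hreg measurableSet_Ioc isCompact_Icc
    Ioc_subset_Icc_self).congr_fun (fun t ht => ?_) measurableSet_Ioc
  rw [rdIntegrand, sqrt_mul ht.1.le, mul_inv, sqrt_eq_rpow, ← rpow_neg ht.1.le]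
  norm_num [mul_assoc]

theorem abs_deriv_mul_rdIntegrand_const_div (hx : 0 < x) (hy : 0 < y) {t : ℝ} (ht : 0 < t) :
    |-(x * y) / t ^ 2| * rdIntegrand x y (x * y / t) = rdDual x y t := by
  have htx : 0 < t + x := by linarith
  have hty : 0 < t + y := by linarith
  have hsqrt_prod : √(x * y / t * (x * y / t + x)) = x * √y * √(t + y) / t := by
    rw [sqrt_eq_iff_mul_self_eq_of_pos (by positivity)]
    field_simp
    rw [sq_sqrt hy.le, sq_sqrt hty.le]
    ring
  have hsqrt_sum : √(x * y / t + y) = √y * √(t + x) / √t := by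
    rw [sqrt_eq_iff_mul_self_eq_of_pos (by positivity)]
    field_simp
    rw [sq_sqrt hy.le, sq_sqrt htx.le, sq_sqrt ht.le]
    ring
  have hsum : x * y / t + y = y * (t + x) / t := by field_simp; ring
  rw [neg_div, abs_neg, abs_of_pos (by positivity), rdIntegrand, rdDual, hsqrt_prod, hsqrt_sum,
    hsum]
  field_simp
  rw [sq_sqrt hy.le]

theorem integral_Ioi_rdIntegrand_eq_integral_rdDual (hx : 0 < x) (hy : 0 < y) {a : ℝ}
    (ha : 0 < a) : ∫ t in Ioi (x * y / a), rdIntegrand x y t = ∫ t in Ioo 0 a, rdDual x y t := by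
  have hxy : 0 < x * y := mul_pos hx hy
  rw [← image_const_div_Ioo_zero hxy ha, integral_image_eq_integral_abs_deriv_smul
    measurableSet_Ioo (fun t ht => (hasDerivAt_const_div _ ht.1.ne').hasDerivWithinAt)
    ((strictAntiOn_const_div hxy).injOn.mono Ioo_subset_Ioi_self)]
  exact setIntegral_congr_fun measurableSet_Ioo
    fun t ht => abs_deriv_mul_rdIntegrand_const_div hx hy ht.1

theorem integrableOn_Ioi_rdIntegrand (hx : 0 < x) (hy : 0 < y) {b : ℝ} (hb : 0 < b) :
    IntegrableOn (rdIntegrand x y) (Ioi b) := by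
  have hxy : 0 < x * y := mul_pos hx hy
  have hb_eq : b = x * y / (x * y / b) := (div_div_cancel₀ hxy.ne').symm
  rw [hb_eq, ← image_const_div_Ioo_zero hxy (div_pos hxy hb),
    integrableOn_image_iff_integrableOn_abs_deriv_smul measurableSet_Ioo
      (fun t ht => (hasDerivAt_const_div _ ht.1.ne').hasDerivWithinAt)
      ((strictAntiOn_const_div hxy).injOn.mono Ioo_subset_Ioi_self)]
  refine IntegrableOn.congr_fun ?_
    (fun t ht => (abs_deriv_mul_rdIntegrand_const_div hx hy ht.1).symm) measurableSet_Ioo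
  exact ((continuousOn_rdDual hx hy).mono Icc_subset_Ici_self).integrableOn_Icc.mono_set
    Ioo_subset_Icc_self

theorem hasDerivAt_rdCorrection (hx : 0 < x) (hy : 0 < y) {t : ℝ} (ht : 0 < t) :
    HasDerivAt (rdCorrection x y) (rdDual x y t - rdIntegrand x y t) t := by
  have htx : 0 < t + x := by linarith
  have hty : 0 < t + y := by linarith
  have hd (c : ℝ) (hc : 0 < t + c) : HasDerivAt (fun s => (√(s + c))⁻¹)
      (-(1 / (2 * √(t + c))) / √(t + c) ^ 2) t := by
    have := ((hasDerivAt_id t).add_const c).sqrt hc.ne'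
    exact (by simpa using this : HasDerivAt (fun s => √(s + c)) (1 / (2 * √(t + c))) t).inv
      (sqrt_pos.2 hc).ne'
  refine ((((hasDerivAt_sqrt ht.ne').mul (hd x htx)).mul (hd y hty)).const_mul
    (-(2 / y))).congr_deriv ?_
  rw [rdDual, rdIntegrand, sqrt_mul ht.le]
  simp only [Pi.mul_apply]
  have hx_sq : √(t + x) ^ 2 = t + x := sq_sqrt htx.le
  have hy_sq : √(t + y) ^ 2 = t + y := sq_sqrt hty.le
  have hy_eq : y = √(t + y) ^ 2 - √t ^ 2 := by rw [hy_sq, sq_sqrt ht.le]; ring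
  have hy_ne : √(t + y) ^ 2 - √t ^ 2 ≠ 0 := hy_eq ▸ hy.ne'
  set a := √t
  set b := √(t + x)
  set c := √(t + y)
  rw [← hx_sq, ← hy_sq, hy_eq]
  field_simp
  ring

theorem integral_rdDual_sub_rdIntegrand (hx : 0 < x) (hy : 0 < y) {a : ℝ} (ha : 0 ≤ a) :
    ∫ t in 0..a, (rdDual x y t - rdIntegrand x y t) = rdCorrection x y a := by
  have hint : IntervalIntegrable (fun t => rdDual x y t - rdIntegrand x y t) volume 0 a :=
    ((continuousOn_rdDual hx hy).mono (uIcc_of_le ha ▸ Icc_subset_Ici_self)).intervalIntegrable.sub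
      ((intervalIntegrable_iff_integrableOn_Ioc_of_le ha).2 (integrableOn_Ioc_rdIntegrand hx hy a))
  rw [intervalIntegral.integral_eq_sub_of_hasDerivAt_of_le ha
    ((continuousOn_rdCorrection hx hy).mono Icc_subset_Ici_self)
    (fun t ht => hasDerivAt_rdCorrection hx hy ht.1) hint]
  simp [rdCorrection]

theorem integral_Ioi_rdIntegrand_add_of_mul_eq (hx : 0 < x) (hy : 0 < y) {l m : ℝ}
    (hl : 0 < l) (hlm : l * m = x * y) :
    (∫ t in Ioi l, rdIntegrand x y t) + ∫ t in Ioi m, rdIntegrand x y t =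
      (∫ t in Ioi 0, rdIntegrand x y t) + rdCorrection x y l := by
  have hm : m = x * y / l := by rw [eq_div_iff hl.ne', mul_comm, hlm]
  have hsplit : ∫ t in Ioi 0, rdIntegrand x y t =
      (∫ t in Ioc 0 l, rdIntegrand x y t) + ∫ t in Ioi l, rdIntegrand x y t := by
    rw [← Ioc_union_Ioi_eq_Ioi hl.le, setIntegral_union (Ioc_disjoint_Ioi le_rfl)
      measurableSet_Ioi (integrableOn_Ioc_rdIntegrand hx hy l)
      (integrableOn_Ioi_rdIntegrand hx hy hl)]
  have hdual : ∫ t in Ioi m, rdIntegrand x y t = ∫ t in Ioc 0 l, rdDual x y t := by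
    rw [hm, integral_Ioi_rdIntegrand_eq_integral_rdDual hx hy hl, integral_Ioc_eq_integral_Ioo]
  have hftc := integral_rdDual_sub_rdIntegrand hx hy hl.le
  rw [intervalIntegral.integral_of_le hl.le, integral_sub
    ((continuousOn_rdDual hx hy).mono Icc_subset_Ici_self |>.integrableOn_Icc.mono_set
      Ioc_subset_Icc_self) (integrableOn_Ioc_rdIntegrand hx hy l)] at hftc
  linarith

theorem rdCorrection_eq_of_mul_eq (hx : 0 ≤ x) {l m : ℝ} (hl : 0 < l)
    (hlm : l * m = x * y) : rdCorrection x y l = -(2 / (y * √(x + y + l + m))) := by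
  have hfactor : (l + x) * (l + y) = l * (x + y + l + m) := by linear_combination -hlm
  rw [rdCorrection, mul_assoc, ← mul_inv, ← sqrt_mul (by linarith), hfactor,
    sqrt_mul hl.le]
  field_simp

end

theorem stmt14_general (x y l m : ℝ) (hx : 0 < x) (hy : 0 < y)
    (hl : 0 < l) (hlm : l * m = x * y) :
    RD l (x + l) (y + l) + RD m (x + m) (y + m) =
      RD 0 x y - 3 / (y * Real.sqrt (x + y + l + m)) := by
  rw [RD_add_add_eq_integral, RD_add_add_eq_integral, RD_zero_eq_integral, ← mul_add,
    integral_Ioi_rdIntegrand_add_of_mul_eq hx hy hl hlm,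
    rdCorrection_eq_of_mul_eq hx.le hl hlm]
  ring

theorem stmt14 (x y l m : ℝ) (hx : 0 < x) (hy : 0 < y)
    (hl : 0 < l) (hm : 0 < m) (hlm : l * m = x * y) :
    RD l (x + l) (y + l) + RD m (x + m) (y + m) =
      RD 0 x y - 3 / (y * Real.sqrt (x + y + l + m)) :=
  stmt14_general x y l m hx hy hl hlm
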